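/- arXiv:1504.04079 — 4 statements merged into one kernel-verified Lean document; each statement's English description precedes it below -/
import Mathlib

section
/- For every real number M > 0 and every s < 1, the Schwarzschild radius function r_M is differentiable at s with derivative r_M'(s) = -(4M²/r_M(s))·exp(-r_M(s)/(2M)). -/
/-- The Kruskal relation function `f_M(ρ) = (1 - ρ/(2M))·exp(ρ/(2M))`. -/
noncomputable def fM (M ρ : ℝ) : ℝ := (1 - ρ / (2 * M)) * Real.exp (ρ / (2 * M))

/-!
`f_M` is strictly decreasing on `[0, ∞)`, since `f_M'(ρ) = -ρ/(4M²)·exp(ρ/(2M))`, and `f_M(0) = 1`.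
Hence `r_M` is a decreasing bijection of `(-∞, 1)` onto the open set `(0, ∞)`; a monotone map whose
image is a neighbourhood is continuous, and the inverse function theorem then gives
`r_M'(s) = 1 / f_M'(r_M(s))`.
-/

open Set Filter Topology

theorem continuousAt_of_antitoneOn_of_image_mem_nhds {α β : Type*} [LinearOrder α]
    [TopologicalSpace α] [OrderTopology α] [LinearOrder β] [TopologicalSpace β] [OrderTopology β]
    [DenselyOrdered β] {f : α → β} {s : Set α} {a : α}
    (h_anti : AntitoneOn f s) (hs : s ∈ 𝓝 a) (hfs : f '' s ∈ 𝓝 (f a)) : ContinuousAt f a :=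
  continuousAt_of_monotoneOn_of_image_mem_nhds (β := βᵒᵈ) h_anti.dual_right hs hfs

lemma fM_hasDerivAt (M ρ : ℝ) :
    HasDerivAt (fM M) (-ρ / (4 * M ^ 2) * Real.exp (ρ / (2 * M))) ρ := by
  have hu : HasDerivAt (fun x : ℝ => x / (2 * M)) (1 / (2 * M)) ρ :=
    (hasDerivAt_id ρ).div_const (2 * M)
  refine ((hu.const_sub 1).mul ((Real.hasDerivAt_exp _).comp ρ hu)).congr_deriv ?_
  simp only [Function.comp_apply]
  ring

section

variable {M : ℝ} (hM : 0 < M)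
include hM

lemma fM_strictAntiOn : StrictAntiOn (fM M) (Ici 0) := by
  refine strictAntiOn_of_hasDerivWithinAt_neg (convex_Ici 0)
    (fun x _ => (fM_hasDerivAt M x).continuousAt.continuousWithinAt)
    (fun x _ => (fM_hasDerivAt M x).hasDerivWithinAt) fun x hx => ?_
  rw [interior_Ici] at hx
  have hx : 0 < x := hx
  exact mul_neg_of_neg_of_pos (div_neg_of_neg_of_pos (neg_neg_of_pos hx) (by positivity))
    (Real.exp_pos _)

lemma fM_lt_one {ρ : ℝ} (hρ : 0 < ρ) : fM M ρ < 1 := by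
  simpa [fM] using fM_strictAntiOn hM self_mem_Ici hρ.le hρ

variable {rM : ℝ → ℝ} (hrM : ∀ s : ℝ, s < 1 → 0 < rM s ∧ fM M (rM s) = s)
include hrM

lemma rM_antitoneOn : AntitoneOn rM (Iio 1) := fun a ha b hb hab => by
  rw [← (fM_strictAntiOn hM).le_iff_ge (hrM a ha).1.le (hrM b hb).1.le, (hrM a ha).2,
    (hrM b hb).2]
  exact hab

lemma rM_image_Iio_one : rM '' Iio 1 = Ioi 0 := by
  refine Subset.antisymm (image_subset_iff.2 fun s hs => (hrM s hs).1) fun ρ hρ => ?_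
  have hρ : 0 < ρ := hρ
  obtain ⟨hpos, hinv⟩ := hrM (fM M ρ) (fM_lt_one hM hρ)
  exact ⟨fM M ρ, fM_lt_one hM hρ, ((fM_strictAntiOn hM).eq_iff_eq hρ.le hpos.le).1 hinv.symm⟩

lemma rM_continuousAt {s : ℝ} (hs : s < 1) : ContinuousAt rM s := by
  refine continuousAt_of_antitoneOn_of_image_mem_nhds (rM_antitoneOn hM hrM)
    (Iio_mem_nhds hs) ?_
  rw [rM_image_Iio_one hM hrM]
  exact Ioi_mem_nhds (hrM s hs).1

end

/-- For every `M > 0` and every `s < 1`, the Schwarzschild radius function `r_M`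
(characterized by `r_M(s) > 0` and `f_M(r_M(s)) = s` for all `s < 1`) is
differentiable at `s` with derivative `r_M'(s) = -(4M²/r_M(s))·exp(-r_M(s)/(2M))`. -/
theorem rM_hasDerivAt (M : ℝ) (hM : 0 < M) (rM : ℝ → ℝ)
    (hrM : ∀ s : ℝ, s < 1 → 0 < rM s ∧ fM M (rM s) = s)
    (s : ℝ) (hs : s < 1) :
    HasDerivAt rM (-(4 * M ^ 2 / rM s) * Real.exp (-(rM s) / (2 * M))) s := by
  have hr : 0 < rM s := (hrM s hs).1
  have hf' : -rM s / (4 * M ^ 2) * Real.exp (rM s / (2 * M)) ≠ 0 :=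
    mul_ne_zero (div_ne_zero (neg_ne_zero.2 hr.ne') (by positivity)) (Real.exp_pos _).ne'
  have hfg : ∀ᶠ y in 𝓝 s, fM M (rM y) = y :=
    eventually_of_mem (Iio_mem_nhds hs) fun y hy => (hrM y hy).2
  refine ((fM_hasDerivAt M (rM s)).of_local_left_inverse
    (rM_continuousAt hM hrM hs) hf' hfg).congr_deriv ?_
  simp only [neg_div, Real.exp_neg]
  field_simp
end

section
/- For every real number M > 0 and every s < 1, the Schwarzschild radius function satisfies the two-sided bound 8M²·(1-s)·exp(-r_M(s)/(2M)) ≤ r_M(s)² ≤ 8M²·(1-s). -/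
/-!
Put `x = r_M(s)/(2M) > 0`, so that `s = (1 - x)·eˣ` and `r_M(s)² = 4M²x²`. The function
`g(t) = 1 - (1 - t)·eᵗ` has `g(0) = 0` and `g'(t) = t·eᵗ`, so `1 - s = g(x)` is squeezed between
`x²/2` and `eˣ·x²/2` by comparing `g'` with `t` and with `t·eˣ`; rescaling by `8M²` gives both bounds.
-/

open Real

lemma hasDerivAt_one_sub_mul_exp (t : ℝ) :
    HasDerivAt (fun t => (1 - t) * exp t) (-(t * exp t)) t :=
  (((hasDerivAt_id t).const_sub 1).mul (hasDerivAt_exp t)).congr_deriv (by simp only [id_eq]; ring)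

lemma sq_div_two_le_one_sub_one_sub_mul_exp {x : ℝ} (hx : 0 ≤ x) :
    x ^ 2 / 2 ≤ 1 - (1 - x) * exp x := by
  have hmono : Monotone fun t : ℝ => 1 - (1 - t) * exp t - t ^ 2 / 2 := by
    refine monotone_of_hasDerivAt_nonneg (f' := fun t => t * (exp t - 1))
      (fun t => (((hasDerivAt_one_sub_mul_exp t).const_sub 1).sub
        ((hasDerivAt_pow 2 t).div_const 2)).congr_deriv (by ring)) fun t => ?_
    rcases le_total 0 t with ht | ht
    · exact mul_nonneg ht (sub_nonneg.mpr (one_le_exp ht))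
    · exact mul_nonneg_of_nonpos_of_nonpos ht (sub_nonpos.mpr (exp_le_one_iff.mpr ht))
  simpa using hmono hx

lemma one_sub_one_sub_mul_exp_le {x : ℝ} (hx : 0 ≤ x) :
    1 - (1 - x) * exp x ≤ x ^ 2 / 2 * exp x := by
  have hmono : Monotone fun t : ℝ => t ^ 2 / 2 * exp t - (1 - (1 - t) * exp t) := by
    refine monotone_of_hasDerivAt_nonneg (f' := fun t => t ^ 2 / 2 * exp t)
      (fun t => ((((hasDerivAt_pow 2 t).div_const 2).mul (hasDerivAt_exp t)).sub
        ((hasDerivAt_one_sub_mul_exp t).const_sub 1)).congr_deriv (by simp))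
      fun t => by positivity
  simpa using hmono hx

/-- For every `M > 0` and every `s < 1`, the Schwarzschild radius function `r_M`
(characterized by `r_M(s) > 0` and `f_M(r_M(s)) = s` for all `s < 1`) satisfies
`8M²·(1-s)·exp(-r_M(s)/(2M)) ≤ r_M(s)² ≤ 8M²·(1-s)`. -/
theorem rM_two_sided_bound (M : ℝ) (hM : 0 < M) (rM : ℝ → ℝ)
    (hrM : ∀ s : ℝ, s < 1 → 0 < rM s ∧ fM M (rM s) = s)
    (s : ℝ) (hs : s < 1) :
    8 * M ^ 2 * (1 - s) * Real.exp (-(rM s) / (2 * M)) ≤ (rM s) ^ 2 ∧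
      (rM s) ^ 2 ≤ 8 * M ^ 2 * (1 - s) := by
  obtain ⟨hr, hf⟩ := hrM s hs
  rw [neg_div]
  set x := rM s / (2 * M)
  have hx : 0 ≤ x := by positivity
  have hs_eq : s = (1 - x) * exp x := hf.symm
  have hr_eq : rM s = 2 * M * x := (mul_div_cancel₀ _ (by positivity)).symm
  rw [hr_eq, hs_eq]
  constructor
  · calc 8 * M ^ 2 * (1 - (1 - x) * exp x) * exp (-x)
        ≤ 8 * M ^ 2 * (x ^ 2 / 2 * exp x) * exp (-x) := by
          gcongr; exact one_sub_one_sub_mul_exp_le hx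
      _ = (2 * M * x) ^ 2 := by rw [exp_neg]; field_simp; ring
  · calc (2 * M * x) ^ 2 = 8 * M ^ 2 * (x ^ 2 / 2) := by ring
      _ ≤ 8 * M ^ 2 * (1 - (1 - x) * exp x) := by
          gcongr; exact sq_div_two_le_one_sub_one_sub_mul_exp hx
end

section
/- For every real number M > 0 and every (τ,x) with (1-τ)² - x² < 1, the identity ∂_τ [ Ω(τ,x)·(1/r(τ,x) + 1/(2M))·x ] = ∂_x [ Ω(τ,x)·(1/r(τ,x) + 1/(2M))·(1-τ) ] holds; this is the scalar form of the divergence identity ∂^μ(^S A_μ)_{01} = 0 expressing that the Schwarzschild orthonormal frame satisfies a Lorentz gauge condition. -/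
/-- The radius function in the `(τ,x)` coordinates: `r(τ,x) = r_M((1-τ)² - x²)`. -/
noncomputable def rr (rM : ℝ → ℝ) (τ x : ℝ) : ℝ := rM ((1 - τ) ^ 2 - x ^ 2)

/-- The conformal factor `Ω²(τ,x) = (32M³/r(τ,x))·exp(-r(τ,x)/(2M))`. -/
noncomputable def Om2 (M : ℝ) (rM : ℝ → ℝ) (τ x : ℝ) : ℝ :=
  32 * M ^ 3 / rr rM τ x * Real.exp (-(rr rM τ x) / (2 * M))

/-- `Ω(τ,x) = √(Ω²(τ,x))`. -/
noncomputable def Om (M : ℝ) (rM : ℝ → ℝ) (τ x : ℝ) : ℝ := Real.sqrt (Om2 M rM τ x)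

/-!
Both sides are derivatives of `G(r_M(s))·c` with `s = (1-τ)² - x²` and `c` constant in the
variable of differentiation, where `G(ρ) = Ω·(1/ρ + 1/(2M))` depends on the point only through
`r`. By the chain rule both equal `(G ∘ r_M)'(s)·(-2)(1-τ)·x`. The only analytic input is that
`r_M` is differentiable: `f_M` is strictly decreasing on `[0, ∞)` with nonvanishing derivative
`-ρ/(4M²)·exp(ρ/(2M))` at `ρ > 0`, so `r_M` is its local inverse there.
-/

open Set Filter Topology

lemma deriv_comp_sub_sq_mul_eq {φ : ℝ → ℝ} {τ x : ℝ}
    (hφ : DifferentiableAt ℝ φ ((1 - τ) ^ 2 - x ^ 2)) :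
    deriv (fun t => φ ((1 - t) ^ 2 - x ^ 2) * x) τ =
      deriv (fun y => φ ((1 - τ) ^ 2 - y ^ 2) * (1 - τ)) x := by
  have hτ : HasDerivAt (fun t : ℝ => (1 - t) ^ 2 - x ^ 2) (-(2 * (1 - τ))) τ := by
    simpa using (((hasDerivAt_id τ).const_sub 1).pow 2).sub_const (x ^ 2)
  have hx : HasDerivAt (fun y : ℝ => (1 - τ) ^ 2 - y ^ 2) (-(2 * x)) x := by
    simpa using ((hasDerivAt_id x).pow 2).const_sub ((1 - τ) ^ 2)
  have hL : HasDerivAt (fun t => φ ((1 - t) ^ 2 - x ^ 2) * x) _ τ :=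
    (hφ.hasDerivAt.comp τ hτ).mul_const x
  have hR : HasDerivAt (fun y => φ ((1 - τ) ^ 2 - y ^ 2) * (1 - τ)) _ x :=
    (hφ.hasDerivAt.comp x hx).mul_const (1 - τ)
  rw [hL.deriv, hR.deriv]
  ring

lemma fM_zero (M : ℝ) : fM M 0 = 1 := by
  simp [fM]

lemma hasStrictDerivAt_fM {M : ℝ} (hM : M ≠ 0) (ρ : ℝ) :
    HasStrictDerivAt (fM M) (-(ρ / (4 * M ^ 2)) * Real.exp (ρ / (2 * M))) ρ := by
  have hlin : HasStrictDerivAt (fun ρ : ℝ => ρ / (2 * M)) (1 / (2 * M)) ρ := by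
    simpa using (hasStrictDerivAt_id ρ).div_const (2 * M)
  refine ((hlin.const_sub 1).mul hlin.exp).congr_deriv ?_
  field_simp
  ring

lemma strictAntiOn_fM {M : ℝ} (hM : 0 < M) : StrictAntiOn (fM M) (Ici 0) := by
  refine strictAntiOn_of_deriv_neg (convex_Ici 0)
    (fun ρ _ => (hasStrictDerivAt_fM hM.ne' ρ).hasDerivAt.continuousAt.continuousWithinAt) ?_
  intro ρ hρ
  rw [interior_Ici, mem_Ioi] at hρ
  rw [(hasStrictDerivAt_fM hM.ne' ρ).hasDerivAt.deriv, neg_mul, neg_lt_zero]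
  positivity

section RadiusFunction

variable {M : ℝ} {rM : ℝ → ℝ} (hM : 0 < M) (hrM : ∀ s : ℝ, s < 1 → 0 < rM s ∧ fM M (rM s) = s)
include hM hrM

lemma eventually_rM_fM_eq {ρ₀ : ℝ} (hρ₀ : 0 < ρ₀) : ∀ᶠ ρ in 𝓝 ρ₀, rM (fM M ρ) = ρ := by
  filter_upwards [eventually_gt_nhds hρ₀] with ρ hρ
  have hlt : fM M ρ < 1 := fM_zero M ▸ strictAntiOn_fM hM self_mem_Ici hρ.le hρ
  obtain ⟨hpos, heq⟩ := hrM (fM M ρ) hlt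
  exact (strictAntiOn_fM hM).injOn hpos.le (mem_Ici.2 hρ.le) heq

lemma differentiableAt_rM {s : ℝ} (hs : s < 1) : DifferentiableAt ℝ rM s := by
  obtain ⟨hr, hfr⟩ := hrM s hs
  have hderiv : -(rM s / (4 * M ^ 2)) * Real.exp (rM s / (2 * M)) ≠ 0 := by
    rw [neg_mul, neg_ne_zero]
    positivity
  have := ((hasStrictDerivAt_fM hM.ne' (rM s)).to_local_left_inverse hderiv
    (eventually_rM_fM_eq hM hrM hr)).hasDerivAt.differentiableAt
  rwa [hfr] at this

end RadiusFunction

/-- `Ω·(1/r + 1/(2M))` as a function of `ρ = r`. -/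
noncomputable def radialCoeff (M ρ : ℝ) : ℝ :=
  Real.sqrt (32 * M ^ 3 / ρ * Real.exp (-ρ / (2 * M))) * (1 / ρ + 1 / (2 * M))

lemma differentiableAt_radialCoeff {M ρ : ℝ} (hM : M ≠ 0) (hρ : ρ ≠ 0) :
    DifferentiableAt ℝ (radialCoeff M) ρ := by
  have hΩ2 : 32 * M ^ 3 / ρ * Real.exp (-ρ / (2 * M)) ≠ 0 := by positivity
  unfold radialCoeff
  fun_prop (disch := assumption)

/-- For every `M > 0` and `(τ,x)` with `(1-τ)² - x² < 1`, the identity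
`∂_τ[Ω·(1/r + 1/(2M))·x] = ∂_x[Ω·(1/r + 1/(2M))·(1-τ)]` holds; this is the scalar form
of the divergence identity `∂^μ(^S A_μ)_{01} = 0` expressing that the Schwarzschild
orthonormal frame satisfies a Lorentz gauge condition. -/
theorem lorentz_gauge_divergence_identity (M : ℝ) (hM : 0 < M) (rM : ℝ → ℝ)
    (hrM : ∀ s : ℝ, s < 1 → 0 < rM s ∧ fM M (rM s) = s)
    (τ x : ℝ) (h : (1 - τ) ^ 2 - x ^ 2 < 1) :
    deriv (fun t : ℝ => Om M rM t x * (1 / rr rM t x + 1 / (2 * M)) * x) τ =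
      deriv (fun y : ℝ => Om M rM τ y * (1 / rr rM τ y + 1 / (2 * M)) * (1 - τ)) x :=
  deriv_comp_sub_sq_mul_eq <|
    (differentiableAt_radialCoeff hM.ne' (hrM _ h).1.ne').comp _ (differentiableAt_rM hM hrM h)
end

section
/- For every real number M > 0, every ε ∈ (0,1), and every real p ≥ 5/3, the integral ∫₀^ε r(0,x)^{-3p/2} · Ω(0,x)·r(0,x)² dx diverges (equals +∞); that is, the mean curvature of the initial hypersurface Σ₀, which blows up like r^{-3/2}, fails to be in L^p(Σ₀) for all p ≥ 5/3. -/
open MeasureTheory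

/-!
Since `(1 - u)·eᵘ ≤ 1 - u²/2` for `u ≥ 0`, we have `f_M(ρ) ≤ 1 - ρ²/(8M²)`, so the relation
`f_M(r(0,x)) = 1 - x²` forces `r(0,x) ≤ 3Mx`. Where `r ≤ 1` the factor `Ω` is at least a constant
times `r^{-1/2}`, so the integrand is at least a constant times `r^{3/2 - 3p/2} ≥ r⁻¹ ≥ (3Mx)⁻¹`
as soon as `p ≥ 5/3`, and `x⁻¹` is not integrable at `0`.
-/

open Set Real

theorem one_sub_mul_exp_le {u : ℝ} (hu : 0 ≤ u) : (1 - u) * exp u ≤ 1 - u ^ 2 / 2 := by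
  set g : ℝ → ℝ := fun w => 1 - w ^ 2 / 2 - (1 - w) * exp w
  have hg : ∀ w, HasDerivAt g (w * (exp w - 1)) w := fun w => by
    refine ((((hasDerivAt_pow 2 w).div_const 2).const_sub 1).sub
      (((hasDerivAt_id w).const_sub 1).mul (hasDerivAt_exp w))).congr_deriv ?_
    simp only [id_eq]
    ring
  have hmono : MonotoneOn g (Ici 0) := by
    refine monotoneOn_of_hasDerivWithinAt_nonneg (convex_Ici 0)
      (fun w _ => (hg w).continuousAt.continuousWithinAt) (fun w _ => (hg w).hasDerivWithinAt)
      fun w hw => ?_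
    rw [interior_Ici] at hw
    exact mul_nonneg hw.le (sub_nonneg.2 (one_le_exp hw.le))
  have := hmono self_mem_Ici hu hu
  norm_num [g] at this
  linarith

theorem fM_le {M ρ : ℝ} (hM : 0 < M) (hρ : 0 ≤ ρ) : fM M ρ ≤ 1 - ρ ^ 2 / (8 * M ^ 2) := by
  convert one_sub_mul_exp_le (div_nonneg hρ (by positivity : (0 : ℝ) ≤ 2 * M)) using 1
  · rfl
  · field_simp
    ring

theorem le_of_fM_eq_one_sub_sq {M ρ x : ℝ} (hM : 0 < M) (hρ : 0 ≤ ρ) (hx : 0 ≤ x)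
    (h : fM M ρ = 1 - x ^ 2) : ρ ≤ 3 * M * x := by
  have hsq : ρ ^ 2 ≤ 8 * M ^ 2 * x ^ 2 := by
    have := fM_le hM hρ
    rw [h, sub_le_sub_iff_left, div_le_iff₀ (by positivity)] at this
    linarith
  exact (pow_le_pow_iff_left₀ hρ (by positivity) two_ne_zero).1 (by nlinarith)

theorem div_le_Om2 {M : ℝ} (hM : 0 < M) {rM : ℝ → ℝ} {τ x : ℝ} (hr0 : 0 < rr rM τ x)
    (hr1 : rr rM τ x ≤ 1) :
    32 * M ^ 3 * exp (-(1 / (2 * M))) / rr rM τ x ≤ Om2 M rM τ x := by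
  rw [Om2, mul_div_right_comm, neg_div]
  gcongr

theorem sqrt_mul_inv_le_rpow_mul_sqrt_div_mul_sq {A r p : ℝ} (hr0 : 0 < r)
    (hr1 : r ≤ 1) (hp : 5 / 3 ≤ p) :
    √A * r⁻¹ ≤ r ^ (-(3 * p / 2)) * (√(A / r) * r ^ 2) := by
  have hsimp : r ^ (-(3 * p / 2)) * (√(A / r) * r ^ 2) = √A * r ^ (3 / 2 - 3 * p / 2) := by
    rw [sqrt_div' A hr0.le, sqrt_eq_rpow r, ← rpow_natCast, div_eq_mul_inv (√A), ← rpow_neg hr0.le]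
    rw [show (3 / 2 - 3 * p / 2 : ℝ) = -(3 * p / 2) + (-(1 / 2) + ((2 : ℕ) : ℝ)) by push_cast; ring,
      rpow_add hr0, rpow_add hr0]
    ring
  rw [hsimp, ← rpow_neg_one]
  exact mul_le_mul_of_nonneg_left (rpow_le_rpow_of_exponent_ge hr0 hr1 (by linarith))
    (sqrt_nonneg A)

theorem lintegral_Ioo_zero_ofReal_mul_inv_eq_top {c δ : ℝ} (hc : 0 < c) (hδ : 0 < δ) :
    ∫⁻ x in Ioo 0 δ, ENNReal.ofReal (c * x⁻¹) = ⊤ := by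
  by_contra h
  have hint : IntegrableOn (fun x => c * x⁻¹) (Ioo 0 δ) :=
    (lintegral_ofReal_ne_top_iff_integrable (by fun_prop)
      ((ae_restrict_iff' measurableSet_Ioo).2 (ae_of_all _ fun x hx => by
        have := hx.1; positivity))).1 h
  have := (intervalIntegrable_iff_integrableOn_Ioo_of_le hδ.le).2 (hint.const_mul c⁻¹)
  simp [← mul_assoc, inv_mul_cancel₀ hc.ne', hδ.ne] at this

theorem inv_le_rpow_mul_Om_mul_sq {M : ℝ} (hM : 0 < M) {rM : ℝ → ℝ}
    (hrM : ∀ s : ℝ, s < 1 → 0 < rM s ∧ fM M (rM s) = s) {p : ℝ} (hp : 5 / 3 ≤ p) {x : ℝ}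
    (hx0 : 0 < x) (hx1 : 3 * M * x ≤ 1) :
    √(32 * M ^ 3 * exp (-(1 / (2 * M)))) / (3 * M) * x⁻¹ ≤
      rr rM 0 x ^ (-(3 * p / 2)) * (Om M rM 0 x * rr rM 0 x ^ 2) := by
  set K := 32 * M ^ 3 * exp (-(1 / (2 * M)))
  obtain ⟨hr0, hfr⟩ : 0 < rr rM 0 x ∧ fM M (rr rM 0 x) = 1 - x ^ 2 := by
    simpa [rr] using hrM (1 - x ^ 2) (by nlinarith)
  have hr : rr rM 0 x ≤ 3 * M * x := le_of_fM_eq_one_sub_sq hM hr0.le hx0.le hfr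
  calc √K / (3 * M) * x⁻¹ = √K * (3 * M * x)⁻¹ := by ring
    _ ≤ √K * (rr rM 0 x)⁻¹ := by gcongr
    _ ≤ rr rM 0 x ^ (-(3 * p / 2)) * (√(K / rr rM 0 x) * rr rM 0 x ^ 2) :=
      sqrt_mul_inv_le_rpow_mul_sqrt_div_mul_sq hr0 (hr.trans hx1) hp
    _ ≤ rr rM 0 x ^ (-(3 * p / 2)) * (Om M rM 0 x * rr rM 0 x ^ 2) := by
      gcongr
      exact sqrt_le_sqrt (div_le_Om2 hM hr0 (hr.trans hx1))

theorem mean_curvature_not_Lp_general (M : ℝ) (hM : 0 < M) (rM : ℝ → ℝ)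
    (hrM : ∀ s : ℝ, s < 1 → 0 < rM s ∧ fM M (rM s) = s)
    (ε : ℝ) (hε0 : 0 < ε) (p : ℝ) (hp : 5 / 3 ≤ p) :
    ∫⁻ x in Set.Ioo (0 : ℝ) ε,
      ENNReal.ofReal (rr rM 0 x ^ (-(3 * p / 2)) * (Om M rM 0 x * (rr rM 0 x) ^ 2)) = ⊤ := by
  set δ := min ε (1 / (3 * M))
  have hδ : 0 < δ := lt_min hε0 (by positivity)
  have hx1 : ∀ x ∈ Ioo 0 δ, 3 * M * x ≤ 1 := fun x hx =>
    (le_div_iff₀' (by positivity)).1 (hx.2.le.trans (min_le_right _ _))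
  refine top_le_iff.1 ?_
  calc ⊤ = ∫⁻ x in Ioo 0 δ,
        ENNReal.ofReal (√(32 * M ^ 3 * exp (-(1 / (2 * M)))) / (3 * M) * x⁻¹) :=
      (lintegral_Ioo_zero_ofReal_mul_inv_eq_top (by positivity) hδ).symm
    _ ≤ ∫⁻ x in Ioo 0 δ,
        ENNReal.ofReal (rr rM 0 x ^ (-(3 * p / 2)) * (Om M rM 0 x * (rr rM 0 x) ^ 2)) :=
      setLIntegral_mono' measurableSet_Ioo fun x hx =>
        ENNReal.ofReal_le_ofReal (inv_le_rpow_mul_Om_mul_sq hM hrM hp hx.1 (hx1 x hx))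
    _ ≤ _ := lintegral_mono_set (Ioo_subset_Ioo_right (min_le_left _ _))

/-- For every `M > 0`, every `ε ∈ (0,1)`, and every real `p ≥ 5/3`, the integral
`∫₀^ε r(0,x)^{-3p/2} · Ω(0,x)·r(0,x)² dx` diverges (equals `+∞`); that is, the mean
curvature of the initial hypersurface `Σ₀`, which blows up like `r^{-3/2}`, fails to be
in `L^p(Σ₀)` for all `p ≥ 5/3`. -/
theorem mean_curvature_not_Lp (M : ℝ) (hM : 0 < M) (rM : ℝ → ℝ)
    (hrM : ∀ s : ℝ, s < 1 → 0 < rM s ∧ fM M (rM s) = s)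
    (ε : ℝ) (hε0 : 0 < ε) (hε1 : ε < 1) (p : ℝ) (hp : 5 / 3 ≤ p) :
    ∫⁻ x in Set.Ioo (0 : ℝ) ε,
      ENNReal.ofReal (rr rM 0 x ^ (-(3 * p / 2)) * (Om M rM 0 x * (rr rM 0 x) ^ 2)) = ⊤ :=
  mean_curvature_not_Lp_general M hM rM hrM ε hε0 p hp
end
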